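/- Let n ≥ 2, χ = 8(n−1)n², E = χ^{−1/2} diag((n−1)i, −i, …, −i), e = [[E, 0],[0, E]]. Let g = [[C, D],[−D̄, C̄]] ∈ M_{2n}(ℂ) with C = diag(c, 𝐂) and D = diag(d, 𝐃) block-diagonal (blocks of sizes 1 and n−1), where c, d ∈ ℂ and 𝐂, 𝐃 ∈ M_{n−1}(ℂ), and suppose g is unitary (g* g = I_{2n}). Then: (i) gᵀ J g = J, so g ∈ Sp(n) = Sp(n,ℂ) ∩ U(2n); (ii) g e = e g; (iii) if c = 1 and d = 0, then for all row vectors a, b ∈ ℂ^{n−1}, g μ(a,b) g⁻¹ = μ(a 𝐂̄ᵀ + b 𝐃̄ᵀ, −a 𝐃ᵀ + b 𝐂ᵀ); (iv) if 𝐂 = I_{n−1} and 𝐃 = 0 (so |c|² + |d|² = 1), then g μ(a,b) g⁻¹ = μ(c a + d b̄, c b − d ā). -/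
import Mathlib


open Matrix Complex

noncomputable section

/-- the index set {1,…,n} split as 1 + (n−1) -/
abbrev Kn (n : ℕ) := Fin 1 ⊕ Fin (n - 1)
abbrev Idx (n : ℕ) := Kn n ⊕ Kn n

/-- entrywise complex conjugation of a matrix -/
def mconj {k l : Type*} (M : Matrix k l ℂ) : Matrix k l ℂ := M.map (starRingEnd ℂ)

/-- the standard symplectic structure matrix J = [[0, Iₙ],[−Iₙ, 0]] -/
def Jmat (n : ℕ) : Matrix (Idx n) (Idx n) ℂ := fromBlocks 0 1 (-1) 0

/-- A = [[0, a],[−āᵀ, 0]] -/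
def Arow (n : ℕ) (a : Fin (n - 1) → ℂ) : Matrix (Kn n) (Kn n) ℂ :=
  fromBlocks 0 (of fun _ j => a j) (of fun i _ => -star (a i)) 0

/-- B = [[0, b],[−bᵀ, 0]] -/
def Brow (n : ℕ) (b : Fin (n - 1) → ℂ) : Matrix (Kn n) (Kn n) ℂ :=
  fromBlocks 0 (of fun _ j => b j) (of fun i _ => -b i) 0

/-- μ(a,b) = [[A, B],[B̄, −Ā]] ∈ m_⊥ -/
def mu (n : ℕ) (a b : Fin (n - 1) → ℂ) : Matrix (Idx n) (Idx n) ℂ :=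
  fromBlocks (Arow n a) (Brow n b) (mconj (Brow n b)) (-(mconj (Arow n a)))

/-- E = χ^{−1/2} diag((n−1)i, −i, …, −i), χ = 8(n−1)n² -/
def Emat (n : ℕ) : Matrix (Kn n) (Kn n) ℂ :=
  ((Real.sqrt (8 * ((n : ℝ) - 1) * (n : ℝ) ^ 2) : ℂ))⁻¹ •
    diagonal (Sum.elim (fun _ => ((n : ℂ) - 1) * I) (fun _ => -I))

/-- e = [[E, 0],[0, E]] -/
def emat (n : ℕ) : Matrix (Idx n) (Idx n) ℂ := fromBlocks (Emat n) 0 0 (Emat n)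

/-- a block-diagonal matrix diag(c, 𝐂) of block sizes 1 and n−1 -/
def Cblk (n : ℕ) (c : ℂ) (C : Matrix (Fin (n - 1)) (Fin (n - 1)) ℂ) :
    Matrix (Kn n) (Kn n) ℂ :=
  fromBlocks (of fun _ _ => c) 0 0 C

/-- g = [[C, D],[−D̄, C̄]] with C = diag(c, 𝐂), D = diag(d, 𝐃) -/
def gmat (n : ℕ) (c d : ℂ) (C D : Matrix (Fin (n - 1)) (Fin (n - 1)) ℂ) :
    Matrix (Idx n) (Idx n) ℂ :=
  fromBlocks (Cblk n c C) (Cblk n d D) (-(mconj (Cblk n d D))) (mconj (Cblk n c C))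

-- ===== auxiliary lemmas =====
def rowm {m : ℕ} (a : Fin m → ℂ) : Matrix (Fin 1) (Fin m) ℂ := of fun _ j => a j
def colm {m : ℕ} (v : Fin m → ℂ) : Matrix (Fin m) (Fin 1) ℂ := of fun i _ => v i
def cst (c : ℂ) : Matrix (Fin 1) (Fin 1) ℂ := of fun _ _ => c
@[simp] theorem mconj_fromBlocks {k l o p : Type*} (A : Matrix k l ℂ) (B : Matrix k o ℂ)
    (C : Matrix p l ℂ) (D : Matrix p o ℂ) :
    mconj (fromBlocks A B C D) = fromBlocks (mconj A) (mconj B) (mconj C) (mconj D) := by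
  simp [mconj, fromBlocks_map]
@[simp] theorem mconj_zero {k l : Type*} : mconj (0 : Matrix k l ℂ) = 0 := by
  ext; simp [mconj]
@[simp] theorem mconj_neg {k l : Type*} (M : Matrix k l ℂ) : mconj (-M) = -(mconj M) := by
  ext; simp [mconj]
@[simp] theorem mconj_rowm {m : ℕ} (a : Fin m → ℂ) :
    mconj (rowm a) = rowm (fun j => star (a j)) := rfl
@[simp] theorem mconj_colm {m : ℕ} (v : Fin m → ℂ) :
    mconj (colm v) = colm (fun i => star (v i)) := rfl
@[simp] theorem mconj_cst (c : ℂ) : mconj (cst c) = cst (star c) := rfl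
@[simp] theorem ct_cst (c : ℂ) : (cst c)ᴴ = cst (star c) := by
  ext i j; simp [cst, conjTranspose_apply]
@[simp] theorem mconj_one {m : Type*} [Fintype m] [DecidableEq m] :
    mconj (1 : Matrix m m ℂ) = 1 := by ext i j; by_cases h : i = j <;> simp [mconj, one_apply, h]
@[simp] theorem mconj_ct {k l : Type*} (M : Matrix k l ℂ) : (mconj M)ᴴ = Mᵀ := by
  ext i j; simp [mconj, conjTranspose_apply]
@[simp] theorem neg_cst (k : ℂ) : -cst k = cst (-k) := rfl
@[simp] theorem of_neg_cst (k : ℂ) :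
    (of (-fun (_ : Fin 1) (_ : Fin 1) => k) : Matrix (Fin 1) (Fin 1) ℂ) = cst (-k) := rfl
@[simp] theorem tr_cst (c : ℂ) : (cst c)ᵀ = cst c := by ext i j; simp [cst]
@[simp] theorem tr_rowm {m : ℕ} (a : Fin m → ℂ) : (rowm a)ᵀ = colm a := rfl
@[simp] theorem tr_colm {m : ℕ} (v : Fin m → ℂ) : (colm v)ᵀ = rowm v := rfl
@[simp] theorem cst_mul_rowm {m : ℕ} (c : ℂ) (a : Fin m → ℂ) :
    cst c * rowm a = rowm (fun j => c * a j) := by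
  ext i j; simp [cst, rowm, mul_apply]
@[simp] theorem colm_mul_cst {m : ℕ} (v : Fin m → ℂ) (c : ℂ) :
    colm v * cst c = colm (fun i => v i * c) := by
  ext i j; simp [cst, colm, mul_apply]
@[simp] theorem cst_mul_cst (c d : ℂ) : cst c * cst d = cst (c * d) := by
  ext i j; simp [cst, mul_apply]
@[simp] theorem rowm_mul_mat {m : ℕ} (a : Fin m → ℂ) (M : Matrix (Fin m) (Fin m) ℂ) :
    rowm a * M = rowm (vecMul a M) := by
  ext i j; simp [rowm, mul_apply, vecMul, dotProduct]
@[simp] theorem mat_mul_colm {m : ℕ} (M : Matrix (Fin m) (Fin m) ℂ) (v : Fin m → ℂ) :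
    M * colm v = colm (M.mulVec v) := by
  ext i j; simp [colm, mul_apply, mulVec, dotProduct]
@[simp] theorem rowm_add {m : ℕ} (a b : Fin m → ℂ) :
    rowm a + rowm b = rowm (fun j => a j + b j) := rfl
@[simp] theorem colm_add {m : ℕ} (a b : Fin m → ℂ) :
    colm a + colm b = colm (fun j => a j + b j) := rfl
@[simp] theorem rowm_neg {m : ℕ} (a : Fin m → ℂ) : -rowm a = rowm (fun j => -(a j)) := rfl
@[simp] theorem colm_neg {m : ℕ} (a : Fin m → ℂ) : -colm a = colm (fun j => -(a j)) := rfl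


theorem diagonal_const {m : Type*} [Fintype m] [DecidableEq m] (k : ℂ) :
    diagonal (fun _ : m => k) = k • (1 : Matrix m m ℂ) := by
  ext i j; by_cases h : i = j <;> simp [diagonal, h, one_apply]

theorem Emat_blocks (n : ℕ) : ∃ x y : ℂ,
    Emat n = fromBlocks (x • (1 : Matrix (Fin 1) (Fin 1) ℂ)) 0 0
      (y • (1 : Matrix (Fin (n-1)) (Fin (n-1)) ℂ)) := by
  refine ⟨((Real.sqrt (8 * ((n : ℝ) - 1) * (n : ℝ) ^ 2) : ℂ))⁻¹ * (((n : ℂ) - 1) * I),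
    ((Real.sqrt (8 * ((n : ℝ) - 1) * (n : ℝ) ^ 2) : ℂ))⁻¹ * (-I), ?_⟩
  rw [Emat, ← fromBlocks_diagonal, fromBlocks_smul, diagonal_const, diagonal_const,
    smul_smul, smul_smul]
  simp

theorem Cblk_comm_E (n : ℕ) (c : ℂ) (C : Matrix (Fin (n-1)) (Fin (n-1)) ℂ) :
    Cblk n c C * Emat n = Emat n * Cblk n c C := by
  obtain ⟨x, y, hE⟩ := Emat_blocks n
  rw [hE]
  simp only [Cblk, fromBlocks_multiply, Matrix.mul_smul, Matrix.smul_mul,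
    Matrix.mul_one, Matrix.one_mul, Matrix.mul_zero, Matrix.zero_mul,
    add_zero, zero_add, smul_zero]

theorem mconj_Cblk (n : ℕ) (c : ℂ) (C : Matrix (Fin (n-1)) (Fin (n-1)) ℂ) :
    mconj (Cblk n c C) = Cblk n (star c) (mconj C) := by
  simp [mconj, Cblk, fromBlocks_map]; rfl

theorem symp_key (n : ℕ) (P Q : Matrix (Kn n) (Kn n) ℂ) :
    (fromBlocks P Q (-(mconj Q)) (mconj P))ᵀ * Jmat n
      = Jmat n * (fromBlocks P Q (-(mconj Q)) (mconj P))ᴴ := by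
  simp [Jmat, fromBlocks_transpose, fromBlocks_conjTranspose, fromBlocks_multiply,
    mconj_ct, Matrix.mul_one, Matrix.one_mul,
    show ∀ (M : Matrix (Kn n) (Kn n) ℂ), (mconj M)ᵀ = Mᴴ from fun _ => rfl]

set_option maxHeartbeats 2000000

theorem case3 (n : ℕ) (C D : Matrix (Fin (n-1)) (Fin (n-1)) ℂ) (a b : Fin (n - 1) → ℂ) :
    gmat n 1 0 C D * mu n a b * (gmat n 1 0 C D)ᴴ
      = mu n (Matrix.vecMul a ((mconj C)ᵀ) + Matrix.vecMul b ((mconj D)ᵀ))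
             (-(Matrix.vecMul a (Dᵀ)) + Matrix.vecMul b (Cᵀ)) := by
  have h1 : (of (fun _ _ => (1:ℂ)) : Matrix (Fin 1) (Fin 1) ℂ) = cst 1 := rfl
  have h2 : (of (fun _ _ => (0:ℂ)) : Matrix (Fin 1) (Fin 1) ℂ) = cst 0 := rfl
  simp only [gmat, mu, Cblk, Arow, Brow, h1, h2,
    show ∀ f : Fin (n-1) → ℂ, (of (fun _ j => f j) : Matrix (Fin 1) (Fin (n-1)) ℂ) = rowm f
      from fun _ => rfl,
    show ∀ f : Fin (n-1) → ℂ, (of (fun i _ => -star (f i)) : Matrix (Fin (n-1)) (Fin 1) ℂ)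
      = colm (fun i => -star (f i)) from fun _ => rfl,
    show ∀ f : Fin (n-1) → ℂ, (of (fun i _ => -f i) : Matrix (Fin (n-1)) (Fin 1) ℂ)
      = colm (fun i => -f i) from fun _ => rfl,
    mconj_fromBlocks, mconj_zero, mconj_neg, mconj_rowm, mconj_colm, mconj_cst,
    fromBlocks_conjTranspose, fromBlocks_multiply, fromBlocks_neg, fromBlocks_add,
    conjTranspose_zero, conjTranspose_one, ct_cst,
    Matrix.mul_zero, Matrix.zero_mul, Matrix.mul_one, Matrix.one_mul,
    add_zero, zero_add, neg_zero, neg_neg,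
    cst_mul_rowm, colm_mul_cst, cst_mul_cst, rowm_mul_mat, mat_mul_colm,
    rowm_add, colm_add, rowm_neg, colm_neg, Matrix.neg_mul, Matrix.mul_neg,
    sub_eq_add_neg, mconj_one, mconj_ct, fromBlocks_transpose,
    Matrix.transpose_zero, Matrix.transpose_one, tr_cst, tr_rowm, tr_colm]
  ext i j
  rcases i with (i|i)|(i|i) <;> rcases j with (j|j)|(j|j) <;>
    simp [rowm, colm, cst, vecMul, mulVec, dotProduct, mconj, mul_apply,
      conjTranspose_apply, Finset.sum_add_distrib, mul_comm] <;> ring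

theorem case4 (n : ℕ) (c d : ℂ) (a b : Fin (n - 1) → ℂ) :
    gmat n c d 1 0 * mu n a b * (gmat n c d 1 0)ᴴ
      = mu n (fun j => c * a j + d * star (b j)) (fun j => c * b j - d * star (a j)) := by
  have h1 : (of (fun _ _ => c) : Matrix (Fin 1) (Fin 1) ℂ) = cst c := rfl
  have h2 : (of (fun _ _ => d) : Matrix (Fin 1) (Fin 1) ℂ) = cst d := rfl
  simp only [gmat, mu, Cblk, Arow, Brow, h1, h2,
    show ∀ f : Fin (n-1) → ℂ, (of (fun _ j => f j) : Matrix (Fin 1) (Fin (n-1)) ℂ) = rowm f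
      from fun _ => rfl,
    show ∀ f : Fin (n-1) → ℂ, (of (fun i _ => -star (f i)) : Matrix (Fin (n-1)) (Fin 1) ℂ)
      = colm (fun i => -star (f i)) from fun _ => rfl,
    show ∀ f : Fin (n-1) → ℂ, (of (fun i _ => -f i) : Matrix (Fin (n-1)) (Fin 1) ℂ)
      = colm (fun i => -f i) from fun _ => rfl,
    mconj_fromBlocks, mconj_zero, mconj_neg, mconj_rowm, mconj_colm, mconj_cst,
    fromBlocks_conjTranspose, fromBlocks_multiply, fromBlocks_neg, fromBlocks_add,
    conjTranspose_zero, conjTranspose_one, ct_cst,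
    Matrix.mul_zero, Matrix.zero_mul, Matrix.mul_one, Matrix.one_mul,
    add_zero, zero_add, neg_zero, neg_neg,
    cst_mul_rowm, colm_mul_cst, cst_mul_cst, rowm_mul_mat, mat_mul_colm,
    rowm_add, colm_add, rowm_neg, colm_neg, Matrix.neg_mul, Matrix.mul_neg,
    sub_eq_add_neg, mconj_one, mconj_ct, fromBlocks_transpose,
    Matrix.transpose_zero, Matrix.transpose_one, tr_cst, tr_rowm, tr_colm]
  ext i j
  rcases i with (i|i)|(i|i) <;> rcases j with (j|j)|(j|j) <;>
    simp [rowm, colm, cst, vecMul, mulVec, dotProduct, mul_apply, conjTranspose_apply] <;> ring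


/-- for unitary g of the given block form:
(i) gᵀ J g = J (so g ∈ Sp(n) = Sp(n,ℂ) ∩ U(2n)); (ii) g commutes with e;
(iii) if c = 1, d = 0, then g μ(a,b) g⁻¹ = μ(a 𝐂̄ᵀ + b 𝐃̄ᵀ, −a 𝐃ᵀ + b 𝐂ᵀ);
(iv) if 𝐂 = 1, 𝐃 = 0 (so |c|² + |d|² = 1),
then g μ(a,b) g⁻¹ = μ(c a + d b̄, c b − d ā). -/
theorem stmt10 (n : ℕ) (hn : 2 ≤ n) (c d : ℂ)
    (C D : Matrix (Fin (n - 1)) (Fin (n - 1)) ℂ)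
    (hg : (gmat n c d C D)ᴴ * gmat n c d C D = 1) :
    (gmat n c d C D)ᵀ * Jmat n * gmat n c d C D = Jmat n ∧
    gmat n c d C D * emat n = emat n * gmat n c d C D ∧
    (c = 1 → d = 0 → ∀ a b : Fin (n - 1) → ℂ,
      gmat n c d C D * mu n a b * (gmat n c d C D)⁻¹
        = mu n (Matrix.vecMul a ((mconj C)ᵀ) + Matrix.vecMul b ((mconj D)ᵀ))
               (-(Matrix.vecMul a (Dᵀ)) + Matrix.vecMul b (Cᵀ))) ∧
    (C = 1 → D = 0 → ∀ a b : Fin (n - 1) → ℂ,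
      gmat n c d C D * mu n a b * (gmat n c d C D)⁻¹
        = mu n (fun j => c * a j + d * star (b j))
               (fun j => c * b j - d * star (a j))) := by
  have hginv : (gmat n c d C D)⁻¹ = (gmat n c d C D)ᴴ := Matrix.inv_eq_left_inv hg
  refine ⟨?_, ?_, ?_, ?_⟩
  · rw [show gmat n c d C D = fromBlocks (Cblk n c C) (Cblk n d D)
        (-(mconj (Cblk n d D))) (mconj (Cblk n c C)) from rfl] at hg ⊢
    rw [symp_key, mul_assoc, hg, mul_one]
  · have h1 := Cblk_comm_E n c C
    have h2 := Cblk_comm_E n d D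
    have h3 : mconj (Cblk n c C) * Emat n = Emat n * mconj (Cblk n c C) := by
      rw [mconj_Cblk]; exact Cblk_comm_E n _ _
    have h4 : -(mconj (Cblk n d D)) * Emat n = Emat n * -(mconj (Cblk n d D)) := by
      rw [Matrix.neg_mul, Matrix.mul_neg, mconj_Cblk, Cblk_comm_E]
    rw [gmat, emat]
    simp only [fromBlocks_multiply, Matrix.mul_zero, Matrix.zero_mul,
      add_zero, zero_add, h1, h2, h3, h4]
  · rintro rfl rfl a b
    rw [hginv]
    exact case3 n C D a b
  · rintro rfl rfl a b
    rw [hginv]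
    exact case4 n c d a b
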